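/- arXiv:2012.02932 — 7 statements merged into one kernel-verified Lean document; each statement's English description precedes it below -/
import Mathlib

section
/- Let σ, ω, Ω, K ∈ ℝ with ω ≠ 0, Ω ≠ 0 and Ω ≠ 2ω, and let A ∈ ℂ. Define x₁ : ℝ → ℝ by x₁(T) = 2·Re( (K(σ−iω)·conj(A)/2) · ( e^{(σ+i(Ω−ω))T}/(Ω(Ω−2ω)) + e^{(σ−iω)T}/(2ωΩ) − e^{(σ+iω)T}/(2ω(2ω−Ω)) ) ). Then for all T ∈ ℝ, x₁''(T) − 2σ·x₁'(T) + (σ²+ω²)·x₁(T) = 2·Re( −(K/2)(σ−iω)·conj(A)·e^{(σ+i(Ω−ω))T} ). -/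
/-! x₁ is the real part of a combination of three exponentials `e^{aT}`, and
`D² − 2σD + (σ²+ω²)` acts on `e^{aT}` as multiplication by its characteristic polynomial at `a`.
That polynomial vanishes at the roots `σ ± iω` and equals `−Ω(Ω−2ω)` at `σ + i(Ω−ω)`, which
is exactly what the coefficient `1/(Ω(Ω−2ω))` of the forced term cancels. -/

section ExpSums

open Complex

variable {ι : Type*} (s : Finset ι) (c a : ι → ℂ)

theorem hasDerivAt_re_sum_mul_cexp (T : ℝ) :
    HasDerivAt (fun t : ℝ => (∑ k ∈ s, c k * cexp (a k * t)).re)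
      (∑ k ∈ s, c k * a k * cexp (a k * T)).re T := by
  have hsum : HasDerivAt (fun t : ℝ => ∑ k ∈ s, c k * cexp (a k * t))
      (∑ k ∈ s, c k * a k * cexp (a k * T)) T := by
    refine HasDerivAt.fun_sum fun k _ => ?_
    have hlin : HasDerivAt (fun t : ℝ => a k * (t : ℂ)) (a k) T := by
      simpa using ((hasDerivAt_id T).ofReal_comp).const_mul (a k)
    simpa [mul_comm, mul_left_comm, mul_assoc] using
      ((Complex.hasDerivAt_exp _).comp T hlin).const_mul (c k)
  exact reCLM.hasFDerivAt.comp_hasDerivAt T hsum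

theorem deriv_re_sum_mul_cexp :
    deriv (fun t : ℝ => (∑ k ∈ s, c k * cexp (a k * t)).re) =
      fun t : ℝ => (∑ k ∈ s, c k * a k * cexp (a k * t)).re :=
  funext fun T => (hasDerivAt_re_sum_mul_cexp s c a T).deriv

theorem deriv_deriv_sub_add_re_sum_mul_cexp (p q : ℝ) (T : ℝ) :
    let f := fun t : ℝ => (∑ k ∈ s, c k * cexp (a k * t)).re
    deriv (deriv f) T - p * deriv f T + q * f T =
      (∑ k ∈ s, c k * (a k ^ 2 - p * a k + q) * cexp (a k * T)).re := by
  intro f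
  simp only [f, deriv_re_sum_mul_cexp]
  rw [← re_ofReal_mul, ← re_ofReal_mul, ← sub_re, ← add_re, Finset.mul_sum, Finset.mul_sum,
    ← Finset.sum_sub_distrib, ← Finset.sum_add_distrib]
  exact congrArg re (Finset.sum_congr rfl fun k _ => by ring)

end ExpSums

theorem charPoly_eval_ofReal_add_mul_I (σ ω θ : ℝ) :
    ((σ : ℂ) + (θ : ℂ) * Complex.I) ^ 2 - ((2 * σ : ℝ) : ℂ) * ((σ : ℂ) + (θ : ℂ) * Complex.I)
      + ((σ ^ 2 + ω ^ 2 : ℝ) : ℂ) = ((ω ^ 2 - θ ^ 2 : ℝ) : ℂ) := by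
  push_cast
  linear_combination (θ : ℂ) ^ 2 * Complex.I_sq

/-- The particular solution x₁ of the first-order MMS equation for the
"zero-th order" parametric resonance satisfies
x₁'' − 2σx₁' + (σ²+ω²)x₁ = 2·Re(−(K/2)(σ−iω)·conj(A)·e^{(σ+i(Ω−ω))T}). -/
theorem stmt_2 (σ ω Ω K : ℝ) (hω : ω ≠ 0) (hΩ : Ω ≠ 0) (hΩω : Ω ≠ 2 * ω) (A : ℂ)
    (x₁ : ℝ → ℝ)
    (hx₁ : ∀ T : ℝ, x₁ T =
      2 * (((K : ℂ) * ((σ : ℂ) - (ω : ℂ) * Complex.I) * (starRingEnd ℂ) A / 2) *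
        (Complex.exp (((σ : ℂ) + ((Ω : ℂ) - (ω : ℂ)) * Complex.I) * (T : ℂ)) /
            ((Ω : ℂ) * ((Ω : ℂ) - 2 * (ω : ℂ)))
          + Complex.exp (((σ : ℂ) - (ω : ℂ) * Complex.I) * (T : ℂ)) /
            (2 * (ω : ℂ) * (Ω : ℂ))
          - Complex.exp (((σ : ℂ) + (ω : ℂ) * Complex.I) * (T : ℂ)) /
            (2 * (ω : ℂ) * (2 * (ω : ℂ) - (Ω : ℂ))))).re) :
    ∀ T : ℝ,
      deriv (deriv x₁) T - 2 * σ * deriv x₁ T + (σ ^ 2 + ω ^ 2) * x₁ T =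
        2 * (-((K : ℂ) / 2) * ((σ : ℂ) - (ω : ℂ) * Complex.I) * (starRingEnd ℂ) A *
          Complex.exp (((σ : ℂ) + ((Ω : ℂ) - (ω : ℂ)) * Complex.I) * (T : ℂ))).re := by
  intro T
  set C : ℂ := K * (σ - ω * Complex.I) * (starRingEnd ℂ) A
  have hΩω' : (Ω : ℂ) - 2 * ω ≠ 0 := sub_ne_zero.mpr (by exact_mod_cast hΩω)
  have hωΩ : 2 * (ω : ℂ) - Ω ≠ 0 := sub_ne_zero.mpr (by exact_mod_cast hΩω.symm)
  have hωC : (ω : ℂ) ≠ 0 := by exact_mod_cast hω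
  have hΩC : (Ω : ℂ) ≠ 0 := by exact_mod_cast hΩ
  let c : Fin 3 → ℂ := ![C / (Ω * (Ω - 2 * ω)), C / (2 * ω * Ω), -C / (2 * ω * (2 * ω - Ω))]
  let a : Fin 3 → ℂ := ![σ + ((Ω - ω : ℝ) : ℂ) * Complex.I, σ + ((-ω : ℝ) : ℂ) * Complex.I,
    σ + (ω : ℂ) * Complex.I]
  have hx : x₁ = fun t : ℝ => (∑ k, c k * Complex.exp (a k * t)).re := by
    funext t
    rw [hx₁, Fin.sum_univ_three, ← Complex.re_ofReal_mul]
    congr 1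
    simp only [c, a, Matrix.cons_val]
    push_cast [neg_mul, ← sub_eq_add_neg]
    ring
  rw [hx, deriv_deriv_sub_add_re_sum_mul_cexp, Fin.sum_univ_three, ← Complex.re_ofReal_mul]
  congr 1
  simp only [c, a, Matrix.cons_val, charPoly_eval_ofReal_add_mul_I]
  push_cast
  field_simp
  ring
end

section
/- Let K, ξ ∈ ℝ with K ≠ 0 and ξ² > K²/4. Set ω_K = √(ξ² − K²/4), μ = (ξ + ω_K)/2 and ν = (ξ − ω_K)/2. If C₁, C₂ ∈ ℂ satisfy i·μ·C₁ = (K/4)·conj(C₂) and i·ν·C₂ = (K/4)·conj(C₁), then A(T) = C₁·e^{iμT} + C₂·e^{iνT} satisfies A'(T) = (K/4)·e^{iξT}·conj(A(T)) for all T ∈ ℝ. -/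
/-! Each mode `C e^{iμT}` is mapped by `A ↦ k e^{iξT} conj A` to `k conj C e^{i(ξ-μ)T}`, so when
`μ + ν = ξ` the map exchanges the two modes of `A = C₁e^{iμT} + C₂e^{iνT}`. The coupling
conditions `iμC₁ = k conj C₂`, `iνC₂ = k conj C₁` say precisely that this exchange reproduces
`A'`. The Case 1 frequencies `(ξ ± ω_K)/2` sum to `ξ`. -/

open Complex ComplexConjugate

lemma hasDerivAt_cexp_const_mul_ofReal (c : ℂ) (T : ℝ) :
    HasDerivAt (fun s : ℝ => exp (c * s)) (c * exp (c * T)) T := by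
  have hlin : HasDerivAt (fun s : ℝ => c * (s : ℂ)) c T := by
    simpa using (ofRealCLM.hasDerivAt (x := T)).const_mul c
  simpa only [mul_comm] using hlin.cexp

lemma exp_I_mul_ofReal_mul_conj (ξ μ T : ℝ) :
    exp (I * ξ * T) * conj (exp (I * μ * T)) = exp (I * ↑(ξ - μ) * T) := by
  rw [← exp_conj, ← exp_add]
  congr 1
  simp only [map_mul, conj_I, conj_ofReal, ofReal_sub]
  ring

theorem hasDerivAt_two_mode_of_coupling (k C₁ C₂ : ℂ) {μ ν ξ : ℝ} (hsum : μ + ν = ξ)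
    (h₁ : I * μ * C₁ = k * conj C₂) (h₂ : I * ν * C₂ = k * conj C₁) (T : ℝ) :
    HasDerivAt (fun s : ℝ => C₁ * exp (I * μ * s) + C₂ * exp (I * ν * s))
      (k * exp (I * ξ * T) * conj (C₁ * exp (I * μ * T) + C₂ * exp (I * ν * T))) T := by
  have hA := ((hasDerivAt_cexp_const_mul_ofReal (I * μ) T).const_mul C₁).add
    ((hasDerivAt_cexp_const_mul_ofReal (I * ν) T).const_mul C₂)
  refine hA.congr_deriv (.symm ?_)
  have hν : ξ - μ = ν := by linarith
  have hμ : ξ - ν = μ := by linarith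
  calc k * exp (I * ξ * T) * conj (C₁ * exp (I * μ * T) + C₂ * exp (I * ν * T))
      = k * conj C₁ * (exp (I * ξ * T) * conj (exp (I * μ * T)))
        + k * conj C₂ * (exp (I * ξ * T) * conj (exp (I * ν * T))) := by
        simp only [map_add, map_mul]; ring
    _ = I * ν * C₂ * exp (I * ν * T) + I * μ * C₁ * exp (I * μ * T) := by
        rw [exp_I_mul_ofReal_mul_conj, exp_I_mul_ofReal_mul_conj, hν, hμ, h₁, h₂]
    _ = C₁ * (I * μ * exp (I * μ * T)) + C₂ * (I * ν * exp (I * ν * T)) := by ring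

theorem stmt_3_general (K ξ : ℝ) (C₁ C₂ : ℂ)
    (h₁ : Complex.I * (((ξ + Real.sqrt (ξ ^ 2 - K ^ 2 / 4)) / 2 : ℝ) : ℂ) * C₁ =
      ((K : ℂ) / 4) * (starRingEnd ℂ) C₂)
    (h₂ : Complex.I * (((ξ - Real.sqrt (ξ ^ 2 - K ^ 2 / 4)) / 2 : ℝ) : ℂ) * C₂ =
      ((K : ℂ) / 4) * (starRingEnd ℂ) C₁) :
    ∀ T : ℝ,
      HasDerivAt (fun s : ℝ =>
          C₁ * Complex.exp (Complex.I *
            (((ξ + Real.sqrt (ξ ^ 2 - K ^ 2 / 4)) / 2 : ℝ) : ℂ) * (s : ℂ))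
          + C₂ * Complex.exp (Complex.I *
            (((ξ - Real.sqrt (ξ ^ 2 - K ^ 2 / 4)) / 2 : ℝ) : ℂ) * (s : ℂ)))
        (((K : ℂ) / 4) * Complex.exp (Complex.I * (ξ : ℂ) * (T : ℂ)) *
          (starRingEnd ℂ)
            (C₁ * Complex.exp (Complex.I *
                (((ξ + Real.sqrt (ξ ^ 2 - K ^ 2 / 4)) / 2 : ℝ) : ℂ) * (T : ℂ))
              + C₂ * Complex.exp (Complex.I *
                (((ξ - Real.sqrt (ξ ^ 2 - K ^ 2 / 4)) / 2 : ℝ) : ℂ) * (T : ℂ))))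
        T :=
  hasDerivAt_two_mode_of_coupling _ C₁ C₂ (by ring) h₁ h₂

/-- In Case 1 (ξ² > K²/4) of the principal parametric resonance, if the
coefficients C₁, C₂ satisfy iμC₁ = (K/4)conj(C₂) and iνC₂ = (K/4)conj(C₁), then
A(T) = C₁e^{iμT} + C₂e^{iνT} solves the amplitude equation A' = (K/4)e^{iξT}conj(A). -/
theorem stmt_3 (K ξ : ℝ) (hK : K ≠ 0) (hξ : ξ ^ 2 > K ^ 2 / 4) (C₁ C₂ : ℂ)
    (h₁ : Complex.I * (((ξ + Real.sqrt (ξ ^ 2 - K ^ 2 / 4)) / 2 : ℝ) : ℂ) * C₁ =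
      ((K : ℂ) / 4) * (starRingEnd ℂ) C₂)
    (h₂ : Complex.I * (((ξ - Real.sqrt (ξ ^ 2 - K ^ 2 / 4)) / 2 : ℝ) : ℂ) * C₂ =
      ((K : ℂ) / 4) * (starRingEnd ℂ) C₁) :
    ∀ T : ℝ,
      HasDerivAt (fun s : ℝ =>
          C₁ * Complex.exp (Complex.I *
            (((ξ + Real.sqrt (ξ ^ 2 - K ^ 2 / 4)) / 2 : ℝ) : ℂ) * (s : ℂ))
          + C₂ * Complex.exp (Complex.I *
            (((ξ - Real.sqrt (ξ ^ 2 - K ^ 2 / 4)) / 2 : ℝ) : ℂ) * (s : ℂ)))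
        (((K : ℂ) / 4) * Complex.exp (Complex.I * (ξ : ℂ) * (T : ℂ)) *
          (starRingEnd ℂ)
            (C₁ * Complex.exp (Complex.I *
                (((ξ + Real.sqrt (ξ ^ 2 - K ^ 2 / 4)) / 2 : ℝ) : ℂ) * (T : ℂ))
              + C₂ * Complex.exp (Complex.I *
                (((ξ - Real.sqrt (ξ ^ 2 - K ^ 2 / 4)) / 2 : ℝ) : ℂ) * (T : ℂ))))
        T :=
  stmt_3_general K ξ C₁ C₂ h₁ h₂
end

section
/- Let K, ξ ∈ ℝ with K ≠ 0, and let μ, ν ∈ ℝ with μ ≠ ν and C₁, C₂ ∈ ℂ both nonzero. If A(T) = C₁·e^{iμT} + C₂·e^{iνT} satisfies A'(T) = (K/4)·e^{iξT}·conj(A(T)) for all T ∈ ℝ, then μ + ν = ξ and μ·ν = K²/16; consequently ξ² > K²/4 and {μ, ν} = {(ξ + √(ξ²−K²/4))/2, (ξ − √(ξ²−K²/4))/2}. -/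
/-!
Differentiating `A' = c e^{iξT} conj A` once more and substituting the conjugate of the equation
eliminates `conj A`: `A'' = iξ A' + |c|² A`. For `A = C₁ e^{iμT} + C₂ e^{iνT}` the exponentials
`e^{iμT}`, `e^{iνT}` are linearly independent, so `μ` and `ν` are the two roots of
`x² - ξx + |c|²` with `|c|² = K²/16`, and Vieta's formulas give the rest.
-/

open Complex ComplexConjugate

lemma hasDerivAt_exp_I_mul (ω T : ℝ) :
    HasDerivAt (fun s : ℝ => exp (I * ω * s)) (I * ω * exp (I * ω * T)) T := by
  simpa [mul_comm] using (((hasDerivAt_id T).ofReal_comp).const_mul (I * ω)).cexp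

lemma hasDerivAt_exp_I_mul_add (C₁ C₂ : ℂ) (μ ν T : ℝ) :
    HasDerivAt (fun s : ℝ => C₁ * exp (I * μ * s) + C₂ * exp (I * ν * s))
      (C₁ * (I * μ) * exp (I * μ * T) + C₂ * (I * ν) * exp (I * ν * T)) T :=
  (((hasDerivAt_exp_I_mul μ T).const_mul C₁).add
    ((hasDerivAt_exp_I_mul ν T).const_mul C₂)).congr_deriv (by ring)

lemma eq_zero_of_exp_I_mul_add_eq_zero {a b : ℂ} {μ ν : ℝ} (hμν : μ ≠ ν)
    (h : ∀ T : ℝ, a * exp (I * μ * T) + b * exp (I * ν * T) = 0) : a = 0 ∧ b = 0 := by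
  have h₀ := h 0
  simp only [ofReal_zero, mul_zero, exp_zero, mul_one] at h₀
  set T₀ : ℝ := Real.pi / (ν - μ)
  have hshift : exp (I * ν * T₀) = -exp (I * μ * T₀) := by
    have hT₀ : (ν - μ) * T₀ = Real.pi := mul_div_cancel₀ _ (sub_ne_zero.mpr hμν.symm)
    calc exp (I * ν * T₀) = exp (I * μ * T₀) * exp (((ν - μ) * T₀ : ℝ) * I) := by
          rw [← exp_add]; push_cast; ring_nf
      _ = -exp (I * μ * T₀) := by rw [hT₀, exp_pi_mul_I]; ring
  have hdiff : (a - b) * exp (I * μ * T₀) = 0 := by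
    linear_combination (h T₀) - b * hshift
  have hab : a - b = 0 := (mul_eq_zero.mp hdiff).resolve_right (exp_ne_zero _)
  exact ⟨by linear_combination (h₀ + hab) / 2, by linear_combination (h₀ - hab) / 2⟩

lemma hasDerivAt_deriv_of_amplitude_eq {A A' : ℝ → ℂ} {c : ℂ} {ξ : ℝ}
    (hA : ∀ T, HasDerivAt A (A' T) T)
    (hODE : ∀ T : ℝ, A' T = c * exp (I * ξ * T) * conj (A T)) (T : ℝ) :
    HasDerivAt A' (I * ξ * A' T + normSq c * A T) T := by
  have hconj : HasDerivAt (fun T => conj (A T)) (conj (A' T)) T := (hA T).star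
  have hunit : exp (I * ξ * T) * conj (exp (I * ξ * T)) = 1 := by
    rw [← exp_conj, ← exp_add]; simp [conj_ofReal]
  have hrhs := ((hasDerivAt_exp_I_mul ξ T).const_mul c).mul hconj
  refine (hrhs.congr_of_eventuallyEq (Filter.Eventually.of_forall hODE)).congr_deriv ?_
  rw [hODE T, map_mul, map_mul, conj_conj, ← mul_conj]
  linear_combination (c * conj c * A T) * hunit

lemma quadratic_eq_zero_of_exp_I_mul_add_solves {C₁ C₂ c : ℂ} {μ ν ξ : ℝ} (hμν : μ ≠ ν)
    (hC₁ : C₁ ≠ 0) (hC₂ : C₂ ≠ 0)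
    (hODE : ∀ T : ℝ, deriv (fun s : ℝ => C₁ * exp (I * μ * s) + C₂ * exp (I * ν * s)) T =
      c * exp (I * ξ * T) * conj (C₁ * exp (I * μ * T) + C₂ * exp (I * ν * T))) :
    μ ^ 2 - ξ * μ + normSq c = 0 ∧ ν ^ 2 - ξ * ν + normSq c = 0 := by
  have hA := hasDerivAt_exp_I_mul_add C₁ C₂ μ ν
  have hA' := hasDerivAt_exp_I_mul_add (C₁ * (I * μ)) (C₂ * (I * ν)) μ ν
  have hsecond := hasDerivAt_deriv_of_amplitude_eq hA fun T => (hA T).deriv ▸ hODE T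
  have hchar : ∀ T : ℝ, ((μ ^ 2 - ξ * μ + normSq c : ℝ) : ℂ) * C₁ * exp (I * μ * T) +
      ((ν ^ 2 - ξ * ν + normSq c : ℝ) : ℂ) * C₂ * exp (I * ν * T) = 0 := fun T => by
    have h := (hA' T).unique (hsecond T)
    push_cast
    linear_combination (-1 : ℂ) * h + (μ * (μ - ξ) * C₁ * exp (I * μ * T) +
      ν * (ν - ξ) * C₂ * exp (I * ν * T) : ℂ) * I_mul_I
  obtain ⟨h₁, h₂⟩ := eq_zero_of_exp_I_mul_add_eq_zero hμν hchar
  exact ⟨ofReal_eq_zero.mp ((mul_eq_zero.mp h₁).resolve_right hC₁),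
    ofReal_eq_zero.mp ((mul_eq_zero.mp h₂).resolve_right hC₂)⟩

lemma add_eq_and_mul_eq_of_quadratic {μ ν ξ p : ℝ} (hμν : μ ≠ ν)
    (hμ : μ ^ 2 - ξ * μ + p = 0) (hν : ν ^ 2 - ξ * ν + p = 0) : μ + ν = ξ ∧ μ * ν = p := by
  have hsum : μ + ν = ξ := by
    have h : (μ - ν) * (μ + ν - ξ) = 0 := by linear_combination hμ - hν
    linarith [(mul_eq_zero.mp h).resolve_left (sub_ne_zero.mpr hμν)]
  exact ⟨hsum, by linear_combination μ * hsum - hμ⟩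

lemma discrim_eq_sq_sub_of_add_of_mul {μ ν ξ p : ℝ} (hsum : μ + ν = ξ) (hprod : μ * ν = p) :
    ξ ^ 2 - 4 * p = (μ - ν) ^ 2 := by
  rw [← hsum, ← hprod]; ring

lemma pair_eq_roots_of_add_of_mul {μ ν ξ p : ℝ} (hsum : μ + ν = ξ) (hprod : μ * ν = p) :
    ({μ, ν} : Set ℝ) =
      {(ξ + Real.sqrt (ξ ^ 2 - 4 * p)) / 2, (ξ - Real.sqrt (ξ ^ 2 - 4 * p)) / 2} := by
  rw [discrim_eq_sq_sub_of_add_of_mul hsum hprod, Real.sqrt_sq_eq_abs]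
  rcases le_total ν μ with h | h
  · rw [abs_of_nonneg (sub_nonneg.mpr h)]
    congr 2 <;> linarith
  · rw [abs_of_nonpos (sub_nonpos.mpr h), Set.pair_comm]
    congr 2 <;> linarith

theorem stmt_4_general (K ξ : ℝ) (μ ν : ℝ) (hμν : μ ≠ ν) (C₁ C₂ : ℂ)
    (hC₁ : C₁ ≠ 0) (hC₂ : C₂ ≠ 0)
    (hODE : ∀ T : ℝ,
      deriv (fun s : ℝ =>
          C₁ * Complex.exp (Complex.I * (μ : ℂ) * (s : ℂ))
            + C₂ * Complex.exp (Complex.I * (ν : ℂ) * (s : ℂ))) T =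
        ((K : ℂ) / 4) * Complex.exp (Complex.I * (ξ : ℂ) * (T : ℂ)) *
          (starRingEnd ℂ)
            (C₁ * Complex.exp (Complex.I * (μ : ℂ) * (T : ℂ))
              + C₂ * Complex.exp (Complex.I * (ν : ℂ) * (T : ℂ)))) :
    μ + ν = ξ ∧ μ * ν = K ^ 2 / 16 ∧ ξ ^ 2 > K ^ 2 / 4 ∧
      ({μ, ν} : Set ℝ) =
        {(ξ + Real.sqrt (ξ ^ 2 - K ^ 2 / 4)) / 2,
         (ξ - Real.sqrt (ξ ^ 2 - K ^ 2 / 4)) / 2} := by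
  have hc : normSq ((K : ℂ) / 4) = K ^ 2 / 16 := by
    rw [normSq_div, normSq_ofReal]; norm_num; ring
  obtain ⟨hμ, hν⟩ := quadratic_eq_zero_of_exp_I_mul_add_solves hμν hC₁ hC₂ hODE
  rw [hc] at hμ hν
  obtain ⟨hsum, hprod⟩ := add_eq_and_mul_eq_of_quadratic hμν hμ hν
  have hK4 : K ^ 2 / 4 = 4 * (K ^ 2 / 16) := by ring
  refine ⟨hsum, hprod, ?_, ?_⟩
  · have hdisc := discrim_eq_sq_sub_of_add_of_mul hsum hprod
    have hpos : 0 < (μ - ν) ^ 2 := sq_pos_of_ne_zero (sub_ne_zero.mpr hμν)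
    linarith
  · rw [hK4]
    exact pair_eq_roots_of_add_of_mul hsum hprod

/-- If A(T) = C₁e^{iμT} + C₂e^{iνT} (with μ ≠ ν and C₁, C₂ ≠ 0) solves the
amplitude equation A' = (K/4)e^{iξT}conj(A), then μ + ν = ξ, μν = K²/16, hence
ξ² > K²/4 and {μ, ν} = {(ξ ± √(ξ²−K²/4))/2}. -/
theorem stmt_4 (K ξ : ℝ) (hK : K ≠ 0) (μ ν : ℝ) (hμν : μ ≠ ν) (C₁ C₂ : ℂ)
    (hC₁ : C₁ ≠ 0) (hC₂ : C₂ ≠ 0)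
    (hODE : ∀ T : ℝ,
      deriv (fun s : ℝ =>
          C₁ * Complex.exp (Complex.I * (μ : ℂ) * (s : ℂ))
            + C₂ * Complex.exp (Complex.I * (ν : ℂ) * (s : ℂ))) T =
        ((K : ℂ) / 4) * Complex.exp (Complex.I * (ξ : ℂ) * (T : ℂ)) *
          (starRingEnd ℂ)
            (C₁ * Complex.exp (Complex.I * (μ : ℂ) * (T : ℂ))
              + C₂ * Complex.exp (Complex.I * (ν : ℂ) * (T : ℂ)))) :
    μ + ν = ξ ∧ μ * ν = K ^ 2 / 16 ∧ ξ ^ 2 > K ^ 2 / 4 ∧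
      ({μ, ν} : Set ℝ) =
        {(ξ + Real.sqrt (ξ ^ 2 - K ^ 2 / 4)) / 2,
         (ξ - Real.sqrt (ξ ^ 2 - K ^ 2 / 4)) / 2} :=
  stmt_4_general K ξ μ ν hμν C₁ C₂ hC₁ hC₂ hODE
end

section
/- Let K, ξ ∈ ℝ with K ≠ 0 and ξ² > K²/4. Set ω_K = √(ξ² − K²/4), μ = (ξ + ω_K)/2 and ν = (ξ − ω_K)/2. Then for every A₀ ∈ ℂ there exists a unique pair (C₁, C₂) ∈ ℂ × ℂ with i·μ·C₁ = (K/4)·conj(C₂), i·ν·C₂ = (K/4)·conj(C₁) and C₁ + C₂ = A₀; moreover A(T) = C₁·e^{iμT} + C₂·e^{iνT} is the unique solution of A'(T) = (K/4)·e^{iξT}·conj(A(T)) with A(0) = A₀. -/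
/-!
Since μ + ν = ξ, multiplying by e^{iξT} turns conj(e^{iμT}) into e^{iνT} and conj(e^{iνT}) into
e^{iμT}. Hence C₁e^{iμT} + C₂e^{iνT} solves A' = k·e^{iξT}·conj A as soon as iμC₁ = k·conj C₂ and
iνC₂ = k·conj C₁. Together with C₁ + C₂ = A₀ these relations form a real-linear system which,
for k = K/4, is uniquely solvable because μ ≠ ν (that is ω_K > 0) and μν = K²/16 = |k|².
The right-hand side of the equation is ‖k‖-Lipschitz in A uniformly in T, so solutions of the
initial value problem are unique.
-/

open Complex ComplexConjugate Set

lemma lipschitzWith_mul_conj (c : ℂ) : LipschitzWith ‖c‖₊ fun z : ℂ => c * conj z := by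
  refine LipschitzWith.of_dist_le_mul fun x y => le_of_eq ?_
  rw [dist_eq_norm, dist_eq_norm, ← mul_sub, ← map_sub, norm_mul, norm_conj, coe_nnnorm]

lemma lipschitzWith_mul_exp_mul_conj (k : ℂ) (ξ t : ℝ) :
    LipschitzWith ‖k‖₊ fun z : ℂ => k * exp (I * ξ * t) * conj z := by
  have hnorm : ‖k * exp (I * ξ * t)‖₊ = ‖k‖₊ := by
    rw [nnnorm_mul, mul_assoc I, ← ofReal_mul, nnnorm_exp_I_mul_ofReal, mul_one]
  exact hnorm ▸ lipschitzWith_mul_conj _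

theorem eq_of_hasDerivAt_resonance {k : ℂ} {ξ : ℝ} {f g : ℝ → ℂ}
    (hf : ∀ t : ℝ, HasDerivAt f (k * exp (I * ξ * t) * conj (f t)) t)
    (hg : ∀ t : ℝ, HasDerivAt g (k * exp (I * ξ * t) * conj (g t)) t) (h₀ : f 0 = g 0) : f = g :=
  ODE_solution_unique_univ (v := fun t z => k * exp (I * ξ * t) * conj z) (s := fun _ => univ)
    (fun t => (lipschitzWith_mul_exp_mul_conj k ξ t).lipschitzOnWith)
    (fun t => ⟨hf t, trivial⟩) (fun t => ⟨hg t, trivial⟩) h₀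

lemma hasDerivAt_mul_exp_mul_ofReal (c a : ℂ) (t : ℝ) :
    HasDerivAt (fun s : ℝ => c * exp (a * s)) (a * c * exp (a * t)) t := by
  have h := ((hasDerivAt_id (t : ℂ)).const_mul a).cexp.comp_ofReal.const_mul c
  exact h.congr_deriv (by simp only [id, mul_one]; ring)

lemma exp_mul_conj_exp_I_mul {μ ν ξ : ℝ} (h : μ + ν = ξ) (t : ℝ) :
    exp (I * ξ * t) * conj (exp (I * μ * t)) = exp (I * ν * t) := by
  rw [← exp_conj, ← exp_add, ← h]
  congr 1
  simp only [map_mul, conj_I, conj_ofReal, ofReal_add]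
  ring

theorem hasDerivAt_two_mode {k C₁ C₂ : ℂ} {μ ν ξ : ℝ} (hξ : μ + ν = ξ)
    (h₁ : I * μ * C₁ = k * conj C₂) (h₂ : I * ν * C₂ = k * conj C₁) (t : ℝ) :
    HasDerivAt (fun s : ℝ => C₁ * exp (I * μ * s) + C₂ * exp (I * ν * s))
      (k * exp (I * ξ * t) * conj (C₁ * exp (I * μ * t) + C₂ * exp (I * ν * t))) t := by
  refine ((hasDerivAt_mul_exp_mul_ofReal C₁ _ t).add
    (hasDerivAt_mul_exp_mul_ofReal C₂ _ t)).congr_deriv ?_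
  have hμ := exp_mul_conj_exp_I_mul hξ t
  have hν := exp_mul_conj_exp_I_mul ((add_comm ν μ).trans hξ) t
  rw [map_add, map_mul, map_mul]
  linear_combination exp (I * μ * t) * h₁ + exp (I * ν * t) * h₂
    - k * conj C₁ * hμ - k * conj C₂ * hν

lemma mode_coeff_fst_eq {μ ν : ℝ} {k C₁ C₂ A : ℂ} (hne : μ ≠ ν)
    (h₁ : I * μ * C₁ = k * conj C₂) (h₂ : I * ν * C₂ = k * conj C₁) (h₃ : C₁ + C₂ = A) :
    C₁ = -(ν * A + I * k * conj A) / (μ - ν) := by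
  have hne' : (μ : ℂ) - ν ≠ 0 := sub_ne_zero.mpr (mod_cast hne)
  rw [eq_div_iff hne', ← h₃, map_add]
  linear_combination (-I) * (h₁ + h₂) + (ν * (C₁ + C₂) + (μ - ν) * C₁) * I_sq

theorem existsUnique_mode_coeffs {μ ν : ℝ} {k : ℂ} (hne : μ ≠ ν) (hk : μ * ν = normSq k)
    (A : ℂ) :
    ∃! p : ℂ × ℂ, I * μ * p.1 = k * conj p.2 ∧ I * ν * p.2 = k * conj p.1 ∧ p.1 + p.2 = A := by
  have hne' : (μ : ℂ) - ν ≠ 0 := sub_ne_zero.mpr (mod_cast hne)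
  have hk' : (μ : ℂ) * ν = k * conj k := by rw [mul_conj, ← hk, ofReal_mul]
  refine ⟨(-(ν * A + I * k * conj A) / (μ - ν), (μ * A + I * k * conj A) / (μ - ν)),
    ⟨?_, ?_, ?_⟩, fun p ⟨h₁, h₂, h₃⟩ => ?_⟩
  · simp only [map_div₀, map_add, map_sub, map_mul, conj_ofReal, conj_I, conj_conj]
    field_simp
    linear_combination (-I * A) * hk' + (-(μ : ℂ) * k * conj A) * I_sq
  · simp only [map_div₀, map_neg, map_add, map_sub, map_mul, conj_ofReal, conj_I, conj_conj]
    field_simp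
    linear_combination (I * A) * hk' + ((ν : ℂ) * k * conj A) * I_sq
  · field_simp; ring
  · have hp₁ := mode_coeff_fst_eq hne h₁ h₂ h₃
    refine Prod.ext hp₁ ?_
    rw [eq_div_iff hne', ← sub_eq_of_eq_add' h₃.symm, hp₁]
    field_simp
    ring

theorem stmt_5_general (K ξ : ℝ) (hξ : ξ ^ 2 > K ^ 2 / 4) (A₀ : ℂ) :
    (∃! p : ℂ × ℂ,
      Complex.I * (((ξ + Real.sqrt (ξ ^ 2 - K ^ 2 / 4)) / 2 : ℝ) : ℂ) * p.1 =
          ((K : ℂ) / 4) * (starRingEnd ℂ) p.2 ∧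
      Complex.I * (((ξ - Real.sqrt (ξ ^ 2 - K ^ 2 / 4)) / 2 : ℝ) : ℂ) * p.2 =
          ((K : ℂ) / 4) * (starRingEnd ℂ) p.1 ∧
      p.1 + p.2 = A₀)
    ∧
    (∀ C₁ C₂ : ℂ,
      Complex.I * (((ξ + Real.sqrt (ξ ^ 2 - K ^ 2 / 4)) / 2 : ℝ) : ℂ) * C₁ =
          ((K : ℂ) / 4) * (starRingEnd ℂ) C₂ →
      Complex.I * (((ξ - Real.sqrt (ξ ^ 2 - K ^ 2 / 4)) / 2 : ℝ) : ℂ) * C₂ =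
          ((K : ℂ) / 4) * (starRingEnd ℂ) C₁ →
      C₁ + C₂ = A₀ →
      ((∀ T : ℝ,
          HasDerivAt (fun s : ℝ =>
              C₁ * Complex.exp (Complex.I *
                  (((ξ + Real.sqrt (ξ ^ 2 - K ^ 2 / 4)) / 2 : ℝ) : ℂ) * (s : ℂ))
                + C₂ * Complex.exp (Complex.I *
                  (((ξ - Real.sqrt (ξ ^ 2 - K ^ 2 / 4)) / 2 : ℝ) : ℂ) * (s : ℂ)))
            (((K : ℂ) / 4) * Complex.exp (Complex.I * (ξ : ℂ) * (T : ℂ)) *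
              (starRingEnd ℂ)
                (C₁ * Complex.exp (Complex.I *
                    (((ξ + Real.sqrt (ξ ^ 2 - K ^ 2 / 4)) / 2 : ℝ) : ℂ) * (T : ℂ))
                  + C₂ * Complex.exp (Complex.I *
                    (((ξ - Real.sqrt (ξ ^ 2 - K ^ 2 / 4)) / 2 : ℝ) : ℂ) * (T : ℂ))))
            T)
        ∧
        (∀ B : ℝ → ℂ,
          (∀ T : ℝ, HasDerivAt B
            (((K : ℂ) / 4) * Complex.exp (Complex.I * (ξ : ℂ) * (T : ℂ)) *
              (starRingEnd ℂ) (B T)) T) →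
          B 0 = A₀ →
          ∀ T : ℝ, B T =
            C₁ * Complex.exp (Complex.I *
                (((ξ + Real.sqrt (ξ ^ 2 - K ^ 2 / 4)) / 2 : ℝ) : ℂ) * (T : ℂ))
              + C₂ * Complex.exp (Complex.I *
                (((ξ - Real.sqrt (ξ ^ 2 - K ^ 2 / 4)) / 2 : ℝ) : ℂ) * (T : ℂ))))) := by
  set ω := Real.sqrt (ξ ^ 2 - K ^ 2 / 4)
  have hω : 0 < ω := Real.sqrt_pos.mpr (by linarith)
  have hω_sq : ω ^ 2 = ξ ^ 2 - K ^ 2 / 4 := Real.sq_sqrt (by linarith)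
  have hne : (ξ + ω) / 2 ≠ (ξ - ω) / 2 := by intro h; linarith
  have hsum : (ξ + ω) / 2 + (ξ - ω) / 2 = ξ := by ring
  have hprod : (ξ + ω) / 2 * ((ξ - ω) / 2) = normSq ((K : ℂ) / 4) := by
    rw [normSq_div, normSq_ofReal, normSq_ofNat]
    linear_combination (-1 / 4 : ℝ) * hω_sq
  refine ⟨existsUnique_mode_coeffs hne hprod A₀, fun C₁ C₂ h₁ h₂ h₃ => ?_⟩
  have hsol := hasDerivAt_two_mode hsum h₁ h₂
  refine ⟨hsol, fun B hB hB₀ T => ?_⟩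
  exact congrFun (eq_of_hasDerivAt_resonance hB hsol (by simp [hB₀, h₃])) T

/-- In Case 1 (ξ² > K²/4), for every initial value A₀ there is a unique
pair (C₁, C₂) with iμC₁ = (K/4)conj(C₂), iνC₂ = (K/4)conj(C₁), C₁ + C₂ = A₀, where
μ = (ξ+ω_K)/2, ν = (ξ−ω_K)/2, ω_K = √(ξ²−K²/4); and A(T) = C₁e^{iμT} + C₂e^{iνT} is
the unique solution of A' = (K/4)e^{iξT}conj(A) with A(0) = A₀. -/
theorem stmt_5 (K ξ : ℝ) (hK : K ≠ 0) (hξ : ξ ^ 2 > K ^ 2 / 4) (A₀ : ℂ) :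
    (∃! p : ℂ × ℂ,
      Complex.I * (((ξ + Real.sqrt (ξ ^ 2 - K ^ 2 / 4)) / 2 : ℝ) : ℂ) * p.1 =
          ((K : ℂ) / 4) * (starRingEnd ℂ) p.2 ∧
      Complex.I * (((ξ - Real.sqrt (ξ ^ 2 - K ^ 2 / 4)) / 2 : ℝ) : ℂ) * p.2 =
          ((K : ℂ) / 4) * (starRingEnd ℂ) p.1 ∧
      p.1 + p.2 = A₀)
    ∧
    (∀ C₁ C₂ : ℂ,
      Complex.I * (((ξ + Real.sqrt (ξ ^ 2 - K ^ 2 / 4)) / 2 : ℝ) : ℂ) * C₁ =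
          ((K : ℂ) / 4) * (starRingEnd ℂ) C₂ →
      Complex.I * (((ξ - Real.sqrt (ξ ^ 2 - K ^ 2 / 4)) / 2 : ℝ) : ℂ) * C₂ =
          ((K : ℂ) / 4) * (starRingEnd ℂ) C₁ →
      C₁ + C₂ = A₀ →
      ((∀ T : ℝ,
          HasDerivAt (fun s : ℝ =>
              C₁ * Complex.exp (Complex.I *
                  (((ξ + Real.sqrt (ξ ^ 2 - K ^ 2 / 4)) / 2 : ℝ) : ℂ) * (s : ℂ))
                + C₂ * Complex.exp (Complex.I *
                  (((ξ - Real.sqrt (ξ ^ 2 - K ^ 2 / 4)) / 2 : ℝ) : ℂ) * (s : ℂ)))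
            (((K : ℂ) / 4) * Complex.exp (Complex.I * (ξ : ℂ) * (T : ℂ)) *
              (starRingEnd ℂ)
                (C₁ * Complex.exp (Complex.I *
                    (((ξ + Real.sqrt (ξ ^ 2 - K ^ 2 / 4)) / 2 : ℝ) : ℂ) * (T : ℂ))
                  + C₂ * Complex.exp (Complex.I *
                    (((ξ - Real.sqrt (ξ ^ 2 - K ^ 2 / 4)) / 2 : ℝ) : ℂ) * (T : ℂ))))
            T)
        ∧
        (∀ B : ℝ → ℂ,
          (∀ T : ℝ, HasDerivAt B
            (((K : ℂ) / 4) * Complex.exp (Complex.I * (ξ : ℂ) * (T : ℂ)) *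
              (starRingEnd ℂ) (B T)) T) →
          B 0 = A₀ →
          ∀ T : ℝ, B T =
            C₁ * Complex.exp (Complex.I *
                (((ξ + Real.sqrt (ξ ^ 2 - K ^ 2 / 4)) / 2 : ℝ) : ℂ) * (T : ℂ))
              + C₂ * Complex.exp (Complex.I *
                (((ξ - Real.sqrt (ξ ^ 2 - K ^ 2 / 4)) / 2 : ℝ) : ℂ) * (T : ℂ))))) :=
  stmt_5_general K ξ hξ A₀
end

section
/- Let K, ξ ∈ ℝ with K ≠ 0 and ξ² > K²/4. Then every solution A : ℝ → ℂ of A'(T) = (K/4)·e^{iξT}·conj(A(T)) is bounded, i.e. there exists M such that |A(T)| ≤ M for all T ∈ ℝ. -/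
/-!
Passing to the rotating frame `B T = exp (-iξT/2) A T` removes the explicit time dependence:
`B' = (K/4) conj B - i (ξ/2) B`, with `‖B‖ = ‖A‖`. In coordinates `B = u + iv` this is the linear
Hamiltonian system with Hamiltonian `(ξ/2)(u² + v²) + (K/4)·2uv`, and this quadratic form is
definite exactly when `|K/4| < |ξ/2|`, i.e. `ξ² > K²/4`. Conservation of a definite form bounds `B`.
-/

open Complex

noncomputable def amplitudeEnergy (α β : ℝ) (z : ℂ) : ℝ :=
  β * ‖z‖ ^ 2 + α * (z ^ 2).im

lemma amplitudeEnergy_eq (α β : ℝ) (z : ℂ) :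
    amplitudeEnergy α β z = β * (z.re ^ 2 + z.im ^ 2) + 2 * α * (z.re * z.im) := by
  rw [amplitudeEnergy, ← normSq_eq_norm_sq, normSq_apply, pow_two z, mul_im]
  ring

lemma sub_abs_mul_sq_norm_le_abs_amplitudeEnergy (α β : ℝ) (z : ℂ) :
    (|β| - |α|) * ‖z‖ ^ 2 ≤ |amplitudeEnergy α β z| := by
  have him : |α * (z ^ 2).im| ≤ |α| * ‖z‖ ^ 2 := by
    rw [abs_mul, ← Complex.norm_pow]
    exact mul_le_mul_of_nonneg_left (abs_im_le_norm _) (abs_nonneg α)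
  have hβ : |β * ‖z‖ ^ 2| = |β| * ‖z‖ ^ 2 := by
    rw [abs_mul, abs_of_nonneg (sq_nonneg ‖z‖)]
  have htri := abs_sub_abs_le_abs_sub (β * ‖z‖ ^ 2) (-(α * (z ^ 2).im))
  rw [abs_neg, sub_neg_eq_add] at htri
  unfold amplitudeEnergy
  linarith

lemma hasDerivAt_rotatingFrame (c : ℂ) (ξ : ℝ) {A : ℝ → ℂ} {T : ℝ}
    (hA : HasDerivAt A (c * exp (I * ξ * T) * (starRingEnd ℂ) (A T)) T) :
    HasDerivAt (fun t : ℝ => exp (-(I * ξ * t) / 2) * A t)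
      (c * (starRingEnd ℂ) (exp (-(I * ξ * T) / 2) * A T)
        - I * (ξ / 2 : ℝ) * (exp (-(I * ξ * T) / 2) * A T)) T := by
  have hphase : HasDerivAt (fun t : ℝ => -(I * ξ * (t : ℂ)) / 2) (-(I * ξ) / 2) T := by
    simpa using ((ofRealCLM.hasDerivAt (x := T)).const_mul (I * ξ)).neg.div_const 2
  refine (hphase.cexp.mul hA).congr_deriv ?_
  have hconj : (starRingEnd ℂ) (exp (-(I * ξ * T) / 2)) = exp (I * ξ * T / 2) := by
    rw [← exp_conj]
    congr 1
    simp [conj_I, map_ofNat]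
  have hexp : exp (I * ξ * T / 2) = exp (-(I * ξ * T) / 2) * exp (I * ξ * T) := by
    rw [← exp_add]
    ring_nf
  rw [map_mul, hconj]
  push_cast
  linear_combination (-(c * (starRingEnd ℂ) (A T))) * hexp

lemma amplitudeEnergy_eq_of_hasDerivAt {α β : ℝ} {B : ℝ → ℂ}
    (hB : ∀ T, HasDerivAt B (α * (starRingEnd ℂ) (B T) - I * β * B T) T) (T : ℝ) :
    amplitudeEnergy α β (B T) = amplitudeEnergy α β (B 0) := by
  have hderiv : ∀ t, HasDerivAt (fun t => amplitudeEnergy α β (B t)) 0 t := by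
    intro t
    have hre : HasDerivAt (fun t => (B t).re) (α * (B t).re + β * (B t).im) t := by
      refine (reCLM.hasFDerivAt.comp_hasDerivAt t (hB t)).congr_deriv ?_
      simp
    have him : HasDerivAt (fun t => (B t).im) (-β * (B t).re - α * (B t).im) t := by
      refine (imCLM.hasFDerivAt.comp_hasDerivAt t (hB t)).congr_deriv ?_
      simp only [imCLM_apply, sub_im, mul_im, ofReal_re, conj_im, ofReal_im, conj_re, mul_re, I_re,
        I_im]
      ring
    simp only [amplitudeEnergy_eq]
    refine (((hre.pow 2).add (him.pow 2)).const_mul β |>.add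
      ((hre.mul him).const_mul (2 * α))).congr_deriv ?_
    ring
  exact is_const_of_deriv_eq_zero (fun t => (hderiv t).differentiableAt)
    (fun t => (hderiv t).deriv) T 0

lemma exists_bound_of_hasDerivAt_conj {α β : ℝ} (hαβ : |α| < |β|) {B : ℝ → ℂ}
    (hB : ∀ T, HasDerivAt B (α * (starRingEnd ℂ) (B T) - I * β * B T) T) :
    ∃ M : ℝ, ∀ T, ‖B T‖ ≤ M := by
  set E := |amplitudeEnergy α β (B 0)|
  have hgap : 0 < |β| - |α| := sub_pos.mpr hαβ
  refine ⟨√(E / (|β| - |α|)), fun T => Real.le_sqrt_of_sq_le ?_⟩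
  rw [le_div_iff₀ hgap, mul_comm]
  simpa only [E, amplitudeEnergy_eq_of_hasDerivAt hB T] using
    sub_abs_mul_sq_norm_le_abs_amplitudeEnergy α β (B T)

theorem stmt_7_general (K ξ : ℝ) (hξ : ξ ^ 2 > K ^ 2 / 4) (A : ℝ → ℂ)
    (hODE : ∀ T : ℝ, HasDerivAt A
      (((K : ℂ) / 4) * Complex.exp (Complex.I * (ξ : ℂ) * (T : ℂ)) *
        (starRingEnd ℂ) (A T)) T) :
    ∃ M : ℝ, ∀ T : ℝ, ‖A T‖ ≤ M := by
  have hdetuned : |K / 4| < |ξ / 2| := by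
    rw [← sq_lt_sq]
    nlinarith
  obtain ⟨M, hM⟩ := exists_bound_of_hasDerivAt_conj hdetuned
    (B := fun t => exp (-(I * ξ * t) / 2) * A t) fun T => by
      convert hasDerivAt_rotatingFrame ((K : ℂ) / 4) ξ (hODE T) using 1
      push_cast
      ring
  refine ⟨M, fun T => ?_⟩
  simpa [norm_exp] using hM T

/-- In Case 1 (ξ² > K²/4), every solution of the amplitude equation
A' = (K/4)e^{iξT}conj(A) is bounded. -/
theorem stmt_7 (K ξ : ℝ) (hK : K ≠ 0) (hξ : ξ ^ 2 > K ^ 2 / 4) (A : ℝ → ℂ)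
    (hODE : ∀ T : ℝ, HasDerivAt A
      (((K : ℂ) / 4) * Complex.exp (Complex.I * (ξ : ℂ) * (T : ℂ)) *
        (starRingEnd ℂ) (A T)) T) :
    ∃ M : ℝ, ∀ T : ℝ, ‖A T‖ ≤ M :=
  stmt_7_general K ξ hξ A hODE
end

section
/- Let K, ξ ∈ ℝ with K ≠ 0 and ξ² < K²/4. Set ω_K = √(K²/4 − ξ²), λ₊ = ω_K/2 + i·ξ/2 and λ₋ = −ω_K/2 + i·ξ/2. Then for every A₀ ∈ ℂ there exists a unique pair (C₊, C₋) ∈ ℂ × ℂ with λ₊·C₊ = (K/4)·conj(C₊), λ₋·C₋ = (K/4)·conj(C₋) and C₊ + C₋ = A₀; moreover A(T) = C₊·e^{λ₊T} + C₋·e^{λ₋T} is the unique solution of A'(T) = (K/4)·e^{iξT}·conj(A(T)) with A(0) = A₀. -/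
/-!
On the real line `{C : μ C = a · conj C}` (a line because `|μ| = |a|`), `t ↦ C e^{μt}` solves
`A' = a e^{iξt} conj A` as soon as `μ - conj μ = iξ`, since then `e^{iξt} conj (e^{μt}) = e^{μt}`.
Both exponents `λ± = (±ω + iξ)/2` have imaginary part `ξ/2` and modulus `K/4`, and
`λ₊ - λ₋ = ω ≠ 0` makes the two lines transversal: `A₀` splits uniquely along them, with
`ω C₊ = (K/4) conj A₀ - λ₋ A₀`. The solution is unique by Picard–Lindelöf, the right-hand side
being `|K/4|`-Lipschitz in `A`.
-/

open Complex ComplexConjugate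

-- `λ₊ = resonanceExponent ω ξ` and `λ₋ = resonanceExponent (-ω) ξ`.
noncomputable def resonanceExponent (ω ξ : ℝ) : ℂ := ((ω / 2 : ℝ) : ℂ) + I * ((ξ / 2 : ℝ) : ℂ)

def IsAmplitudeSolution (a : ℂ) (ξ : ℝ) (A : ℝ → ℂ) : Prop :=
  ∀ t : ℝ, HasDerivAt A (a * exp (I * ξ * t) * conj (A t)) t

section resonanceExponent

variable (ω ξ : ℝ)

lemma resonanceExponent_im : (resonanceExponent ω ξ).im = ξ / 2 := by
  simp [resonanceExponent]

lemma conj_resonanceExponent : conj (resonanceExponent ω ξ) = -resonanceExponent (-ω) ξ := by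
  simp only [resonanceExponent, map_add, map_mul, conj_ofReal, conj_I]
  push_cast; ring

lemma resonanceExponent_sub_neg : resonanceExponent ω ξ - resonanceExponent (-ω) ξ = ω := by
  simp only [resonanceExponent]; push_cast; ring

lemma resonanceExponent_mul_neg :
    resonanceExponent ω ξ * resonanceExponent (-ω) ξ = -(((ω ^ 2 + ξ ^ 2) / 4 : ℝ) : ℂ) := by
  simp only [resonanceExponent]; push_cast
  linear_combination ((ξ : ℂ) ^ 2 / 4) * I_sq

end resonanceExponent

theorem existsUnique_eigen_decomposition {ω ξ : ℝ} {a : ℂ} (hω : ω ≠ 0)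
    (ha : normSq a = (ω ^ 2 + ξ ^ 2) / 4) (A₀ : ℂ) :
    ∃! p : ℂ × ℂ, resonanceExponent ω ξ * p.1 = a * conj p.1 ∧
      resonanceExponent (-ω) ξ * p.2 = a * conj p.2 ∧ p.1 + p.2 = A₀ := by
  set μp := resonanceExponent ω ξ
  set μm := resonanceExponent (-ω) ξ
  have hωC : (ω : ℂ) ≠ 0 := ofReal_ne_zero.mpr hω
  have hdiff : μp - μm = ω := resonanceExponent_sub_neg ω ξ
  have hprod : μp * μm = -(a * conj a) := by
    rw [resonanceExponent_mul_neg, mul_conj, ha]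
  have hconj_m : conj μm = -μp := by
    simpa only [neg_neg] using conj_resonanceExponent (-ω) ξ
  set Cp := (a * conj A₀ - μm * A₀) / ω
  have hωCp : ω * Cp = a * conj A₀ - μm * A₀ := mul_div_cancel₀ _ hωC
  have hCp : μp * Cp = a * conj Cp := by
    rw [map_div₀, conj_ofReal, ← mul_div_assoc, ← mul_div_assoc, div_left_inj' hωC]
    simp only [map_sub, map_mul, conj_conj, hconj_m]
    linear_combination (-A₀) * hprod
  refine ⟨(Cp, A₀ - Cp), ⟨hCp, ?_, add_sub_cancel Cp A₀⟩, ?_⟩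
  · rw [map_sub]
    linear_combination hωCp - hCp + Cp * hdiff
  · rintro ⟨q₁, q₂⟩ ⟨hq₁, hq₂, hsum⟩
    have hconj_sum : conj q₁ + conj q₂ = conj A₀ := by rw [← map_add, hsum]
    have hq₁_eq : q₁ = Cp := by
      rw [eq_div_iff hωC]
      linear_combination hq₁ + hq₂ + a * hconj_sum - μm * hsum - q₁ * hdiff
    ext
    exacts [hq₁_eq, by rw [← hq₁_eq, ← hsum, add_sub_cancel_left]]

lemma lipschitzWith_mul_exp_I_mul_conj (a : ℂ) (ξ t : ℝ) :
    LipschitzWith ‖a‖₊ fun z : ℂ => a * exp (I * ξ * t) * conj z :=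
  LipschitzWith.of_dist_le_mul fun z w => by
    simp [dist_eq_norm, ← mul_sub, ← map_sub, norm_exp]

namespace IsAmplitudeSolution

variable {a : ℂ} {ξ : ℝ}

lemma add {f g : ℝ → ℂ} (hf : IsAmplitudeSolution a ξ f) (hg : IsAmplitudeSolution a ξ g) :
    IsAmplitudeSolution a ξ (fun t => f t + g t) := fun t =>
  ((hf t).add (hg t)).congr_deriv (by rw [map_add]; ring)

lemma mul_exp {μ C : ℂ} (hμ : μ.im = ξ / 2) (hC : μ * C = a * conj C) :
    IsAmplitudeSolution a ξ (fun t => C * exp (μ * t)) := by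
  intro t
  have hμ' : μ - conj μ = I * ξ := by rw [sub_conj, hμ]; push_cast; ring
  have hexp : exp (I * ξ * t) * exp (conj μ * t) = exp (μ * t) := by
    rw [← exp_add]
    congr 1
    linear_combination (-(t : ℂ)) * hμ'
  have hderiv := (((hasDerivAt_id (t : ℂ)).const_mul μ).cexp.comp_ofReal).const_mul C
  refine hderiv.congr_deriv ?_
  simp only [map_mul, ← exp_conj, conj_ofReal, id, mul_one]
  linear_combination exp (μ * t) * hC - a * conj C * hexp

lemma eq_of_apply_eq {f g : ℝ → ℂ} (hf : IsAmplitudeSolution a ξ f)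
    (hg : IsAmplitudeSolution a ξ g) {t₀ : ℝ} (h : f t₀ = g t₀) : f = g :=
  ODE_solution_unique_univ (s := fun _ => Set.univ)
    (fun t => (lipschitzWith_mul_exp_I_mul_conj a ξ t).lipschitzOnWith)
    (fun t => ⟨hf t, trivial⟩) (fun t => ⟨hg t, trivial⟩) h

end IsAmplitudeSolution

theorem stmt_9_general (K ξ : ℝ) (hξ : ξ ^ 2 < K ^ 2 / 4) (A₀ : ℂ) :
    (∃! p : ℂ × ℂ,
      ((((Real.sqrt (K ^ 2 / 4 - ξ ^ 2) / 2 : ℝ) : ℂ)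
          + Complex.I * ((ξ / 2 : ℝ) : ℂ)) * p.1 =
        ((K : ℂ) / 4) * (starRingEnd ℂ) p.1) ∧
      ((((-(Real.sqrt (K ^ 2 / 4 - ξ ^ 2)) / 2 : ℝ) : ℂ)
          + Complex.I * ((ξ / 2 : ℝ) : ℂ)) * p.2 =
        ((K : ℂ) / 4) * (starRingEnd ℂ) p.2) ∧
      p.1 + p.2 = A₀)
    ∧
    (∀ Cp Cm : ℂ,
      ((((Real.sqrt (K ^ 2 / 4 - ξ ^ 2) / 2 : ℝ) : ℂ)
          + Complex.I * ((ξ / 2 : ℝ) : ℂ)) * Cp =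
        ((K : ℂ) / 4) * (starRingEnd ℂ) Cp) →
      ((((-(Real.sqrt (K ^ 2 / 4 - ξ ^ 2)) / 2 : ℝ) : ℂ)
          + Complex.I * ((ξ / 2 : ℝ) : ℂ)) * Cm =
        ((K : ℂ) / 4) * (starRingEnd ℂ) Cm) →
      Cp + Cm = A₀ →
      ((∀ T : ℝ,
          HasDerivAt (fun t : ℝ =>
              Cp * Complex.exp ((((Real.sqrt (K ^ 2 / 4 - ξ ^ 2) / 2 : ℝ) : ℂ)
                  + Complex.I * ((ξ / 2 : ℝ) : ℂ)) * (t : ℂ))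
                + Cm * Complex.exp ((((-(Real.sqrt (K ^ 2 / 4 - ξ ^ 2)) / 2 : ℝ) : ℂ)
                  + Complex.I * ((ξ / 2 : ℝ) : ℂ)) * (t : ℂ)))
            (((K : ℂ) / 4) * Complex.exp (Complex.I * (ξ : ℂ) * (T : ℂ)) *
              (starRingEnd ℂ)
                (Cp * Complex.exp ((((Real.sqrt (K ^ 2 / 4 - ξ ^ 2) / 2 : ℝ) : ℂ)
                    + Complex.I * ((ξ / 2 : ℝ) : ℂ)) * (T : ℂ))
                  + Cm * Complex.exp ((((-(Real.sqrt (K ^ 2 / 4 - ξ ^ 2)) / 2 : ℝ) : ℂ)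
                    + Complex.I * ((ξ / 2 : ℝ) : ℂ)) * (T : ℂ))))
            T)
        ∧
        (∀ B : ℝ → ℂ,
          (∀ T : ℝ, HasDerivAt B
            (((K : ℂ) / 4) * Complex.exp (Complex.I * (ξ : ℂ) * (T : ℂ)) *
              (starRingEnd ℂ) (B T)) T) →
          B 0 = A₀ →
          ∀ T : ℝ, B T =
            Cp * Complex.exp ((((Real.sqrt (K ^ 2 / 4 - ξ ^ 2) / 2 : ℝ) : ℂ)
                + Complex.I * ((ξ / 2 : ℝ) : ℂ)) * (T : ℂ))
              + Cm * Complex.exp ((((-(Real.sqrt (K ^ 2 / 4 - ξ ^ 2)) / 2 : ℝ) : ℂ)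
                + Complex.I * ((ξ / 2 : ℝ) : ℂ)) * (T : ℂ))))) := by
  set ω := Real.sqrt (K ^ 2 / 4 - ξ ^ 2)
  have hω : ω ≠ 0 := (Real.sqrt_pos.mpr (by linarith)).ne'
  have ha : normSq ((K : ℂ) / 4) = (ω ^ 2 + ξ ^ 2) / 4 := by
    rw [Real.sq_sqrt (by linarith), map_div₀, normSq_ofReal]
    simp only [normSq_ofNat]
    ring
  refine ⟨existsUnique_eigen_decomposition hω ha A₀, fun Cp Cm hCp hCm hsum => ?_⟩
  have hA : IsAmplitudeSolution ((K : ℂ) / 4) ξ fun t =>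
      Cp * exp (resonanceExponent ω ξ * t) + Cm * exp (resonanceExponent (-ω) ξ * t) :=
    (IsAmplitudeSolution.mul_exp (resonanceExponent_im ω ξ) hCp).add
      (IsAmplitudeSolution.mul_exp (resonanceExponent_im (-ω) ξ) hCm)
  refine ⟨hA, fun B hB hB0 => congrFun (IsAmplitudeSolution.eq_of_apply_eq hB hA (t₀ := 0) ?_)⟩
  simp [hB0, hsum]

/-- In Case 2 (ξ² < K²/4), with ω_K = √(K²/4 − ξ²),
λ₊ = ω_K/2 + iξ/2, λ₋ = −ω_K/2 + iξ/2, for every A₀ there is a unique pair (C₊, C₋)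
with λ₊C₊ = (K/4)conj(C₊), λ₋C₋ = (K/4)conj(C₋), C₊ + C₋ = A₀; and
A(T) = C₊e^{λ₊T} + C₋e^{λ₋T} is the unique solution of A' = (K/4)e^{iξT}conj(A)
with A(0) = A₀. -/
theorem stmt_9 (K ξ : ℝ) (hK : K ≠ 0) (hξ : ξ ^ 2 < K ^ 2 / 4) (A₀ : ℂ) :
    (∃! p : ℂ × ℂ,
      ((((Real.sqrt (K ^ 2 / 4 - ξ ^ 2) / 2 : ℝ) : ℂ)
          + Complex.I * ((ξ / 2 : ℝ) : ℂ)) * p.1 =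
        ((K : ℂ) / 4) * (starRingEnd ℂ) p.1) ∧
      ((((-(Real.sqrt (K ^ 2 / 4 - ξ ^ 2)) / 2 : ℝ) : ℂ)
          + Complex.I * ((ξ / 2 : ℝ) : ℂ)) * p.2 =
        ((K : ℂ) / 4) * (starRingEnd ℂ) p.2) ∧
      p.1 + p.2 = A₀)
    ∧
    (∀ Cp Cm : ℂ,
      ((((Real.sqrt (K ^ 2 / 4 - ξ ^ 2) / 2 : ℝ) : ℂ)
          + Complex.I * ((ξ / 2 : ℝ) : ℂ)) * Cp =
        ((K : ℂ) / 4) * (starRingEnd ℂ) Cp) →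
      ((((-(Real.sqrt (K ^ 2 / 4 - ξ ^ 2)) / 2 : ℝ) : ℂ)
          + Complex.I * ((ξ / 2 : ℝ) : ℂ)) * Cm =
        ((K : ℂ) / 4) * (starRingEnd ℂ) Cm) →
      Cp + Cm = A₀ →
      ((∀ T : ℝ,
          HasDerivAt (fun t : ℝ =>
              Cp * Complex.exp ((((Real.sqrt (K ^ 2 / 4 - ξ ^ 2) / 2 : ℝ) : ℂ)
                  + Complex.I * ((ξ / 2 : ℝ) : ℂ)) * (t : ℂ))
                + Cm * Complex.exp ((((-(Real.sqrt (K ^ 2 / 4 - ξ ^ 2)) / 2 : ℝ) : ℂ)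
                  + Complex.I * ((ξ / 2 : ℝ) : ℂ)) * (t : ℂ)))
            (((K : ℂ) / 4) * Complex.exp (Complex.I * (ξ : ℂ) * (T : ℂ)) *
              (starRingEnd ℂ)
                (Cp * Complex.exp ((((Real.sqrt (K ^ 2 / 4 - ξ ^ 2) / 2 : ℝ) : ℂ)
                    + Complex.I * ((ξ / 2 : ℝ) : ℂ)) * (T : ℂ))
                  + Cm * Complex.exp ((((-(Real.sqrt (K ^ 2 / 4 - ξ ^ 2)) / 2 : ℝ) : ℂ)
                    + Complex.I * ((ξ / 2 : ℝ) : ℂ)) * (T : ℂ))))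
            T)
        ∧
        (∀ B : ℝ → ℂ,
          (∀ T : ℝ, HasDerivAt B
            (((K : ℂ) / 4) * Complex.exp (Complex.I * (ξ : ℂ) * (T : ℂ)) *
              (starRingEnd ℂ) (B T)) T) →
          B 0 = A₀ →
          ∀ T : ℝ, B T =
            Cp * Complex.exp ((((Real.sqrt (K ^ 2 / 4 - ξ ^ 2) / 2 : ℝ) : ℂ)
                + Complex.I * ((ξ / 2 : ℝ) : ℂ)) * (T : ℂ))
              + Cm * Complex.exp ((((-(Real.sqrt (K ^ 2 / 4 - ξ ^ 2)) / 2 : ℝ) : ℂ)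
                + Complex.I * ((ξ / 2 : ℝ) : ℂ)) * (T : ℂ))))) :=
  stmt_9_general K ξ hξ A₀
end

section
/- Let K ∈ ℝ and A₀ ∈ ℂ. Define A : ℝ → ℂ by A(T) = A₀·e^{iKT/4} + (K/4)·(conj(A₀) − i·A₀)·T·e^{iKT/4}. Then A(0) = A₀ and A'(T) = (K/4)·e^{i(K/2)T}·conj(A(T)) for all T ∈ ℝ. -/
/-- In the degenerate Case 3 (ξ = K/2), the function
A(T) = A₀e^{iKT/4} + (K/4)(conj(A₀) − iA₀)Te^{iKT/4} satisfies A(0) = A₀ and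
A'(T) = (K/4)e^{i(K/2)T}conj(A(T)). -/
theorem stmt_12 (K : ℝ) (A₀ : ℂ) (A : ℝ → ℂ)
    (hA : ∀ T : ℝ, A T =
      A₀ * Complex.exp (Complex.I * ((K : ℂ) / 4) * (T : ℂ))
        + ((K : ℂ) / 4) * ((starRingEnd ℂ) A₀ - Complex.I * A₀) * (T : ℂ) *
            Complex.exp (Complex.I * ((K : ℂ) / 4) * (T : ℂ))) :
    A 0 = A₀ ∧
    ∀ T : ℝ, HasDerivAt A
      (((K : ℂ) / 4) * Complex.exp (Complex.I * ((K : ℂ) / 2) * (T : ℂ)) *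
        (starRingEnd ℂ) (A T)) T := by
  constructor
  · simp [hA 0]
  · intro T
    have hAeq : A = fun T : ℝ =>
      A₀ * Complex.exp (Complex.I * ((K : ℂ) / 4) * (T : ℂ))
        + ((K : ℂ) / 4) * ((starRingEnd ℂ) A₀ - Complex.I * A₀) * (T : ℂ) *
            Complex.exp (Complex.I * ((K : ℂ) / 4) * (T : ℂ)) := funext hA
    rw [hAeq]
    set c : ℂ := ((K : ℂ) / 4) * ((starRingEnd ℂ) A₀ - Complex.I * A₀) with hc
    -- derivative of T ↦ exp(I*(K/4)*T)
    have hT : HasDerivAt (fun T : ℝ => (T : ℂ)) 1 T := by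
      simpa using (hasDerivAt_id T).ofReal_comp
    have he : HasDerivAt (fun T : ℝ => Complex.exp (Complex.I * ((K : ℂ) / 4) * (T : ℂ)))
        (Complex.I * ((K : ℂ) / 4) * Complex.exp (Complex.I * ((K : ℂ) / 4) * (T : ℂ))) T := by
      have := ((hT.const_mul (Complex.I * ((K : ℂ) / 4))).cexp)
      simpa [mul_comm] using this
    have hd : HasDerivAt (fun T : ℝ =>
        A₀ * Complex.exp (Complex.I * ((K : ℂ) / 4) * (T : ℂ))
          + c * (T : ℂ) * Complex.exp (Complex.I * ((K : ℂ) / 4) * (T : ℂ)))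
        (A₀ * (Complex.I * ((K : ℂ) / 4) * Complex.exp (Complex.I * ((K : ℂ) / 4) * (T : ℂ)))
          + ((c * 1) * Complex.exp (Complex.I * ((K : ℂ) / 4) * (T : ℂ))
            + c * (T : ℂ) * (Complex.I * ((K : ℂ) / 4)
              * Complex.exp (Complex.I * ((K : ℂ) / 4) * (T : ℂ))))) T :=
      (he.const_mul A₀).add (((hT.const_mul c).mul he))
    convert hd using 1
    beta_reduce
    rw [hc]
    simp only [map_add, map_mul, map_sub, map_div₀, Complex.conj_ofReal, Complex.conj_I,
      ← Complex.exp_conj, map_ofNat, RingHom.map_one, Complex.conj_conj]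
    have hexp : Complex.exp (Complex.I * ((K : ℂ) / 2) * (T : ℂ)) *
        Complex.exp (-Complex.I * ((K : ℂ) / 4) * (T : ℂ)) =
        Complex.exp (Complex.I * ((K : ℂ) / 4) * (T : ℂ)) := by
      rw [← Complex.exp_add]
      congr 1
      ring
    linear_combination (((K : ℂ)/4) * ((starRingEnd ℂ) A₀ +
        (((K : ℂ)/4) * (A₀ + Complex.I * (starRingEnd ℂ) A₀)) * (T : ℂ))) * hexp
      + ((K : ℂ)/4)^2 * (T : ℂ) * A₀ *
          Complex.exp (Complex.I * ((K : ℂ) / 4) * (T : ℂ)) * Complex.I_sq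
end
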